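/- arXiv:2505.12713 — 5 statements merged into one kernel-verified Lean document; each statement's English description precedes it below -/
import Mathlib

section
/- If a matrix H ∈ ℝ_+^{n×r} with r ≥ 2 satisfies the sufficiently scattered condition SSC1, then H has full column rank r. -/
open Matrix

noncomputable def l2 {r : Type*} [Fintype r] (x : r → ℝ) : ℝ :=
  Real.sqrt (∑ i, x i ^ 2)

def coneRows {n r : Type*} [Fintype n] [Fintype r]
    (H : Matrix n r ℝ) : Set (r → ℝ) :=
  {x | ∃ y : n → ℝ, (∀ i, 0 ≤ y i) ∧ x = Hᵀ *ᵥ y}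

def SSC1 {n r : Type*} [Fintype n] [Fintype r] (H : Matrix n r ℝ) : Prop :=
  {x : r → ℝ | (∀ i, 0 ≤ x i) ∧
      Real.sqrt ((Fintype.card r : ℝ) - 1) * l2 x ≤ ∑ i, x i} ⊆ coneRows H

/-!
The all-ones vector `e` and the vectors `e + eⱼ` satisfy `(r - 1)‖x‖₂² ≤ (eᵀx)²`, so they lie in
the second-order cone and hence, under SSC1, in the cone generated by the rows of `H`. Their
differences are the standard basis vectors, so the rows of `H` span `ℝʳ`.
-/

variable {n r : Type*} [Fintype n] [Fintype r]

lemma coneRows_subset_range (H : Matrix n r ℝ) :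
    coneRows H ⊆ LinearMap.range Hᵀ.mulVecLin := by
  rintro x ⟨y, -, rfl⟩
  exact ⟨y, rfl⟩

lemma sqrt_mul_l2_le_sum {c : ℝ} {x : r → ℝ} (hx : 0 ≤ ∑ i, x i)
    (h : c * ∑ i, x i ^ 2 ≤ (∑ i, x i) ^ 2) : Real.sqrt c * l2 x ≤ ∑ i, x i :=
  calc Real.sqrt c * l2 x = Real.sqrt (c * ∑ i, x i ^ 2) :=
        (Real.sqrt_mul' c (Finset.sum_nonneg fun i _ => sq_nonneg (x i))).symm
    _ ≤ Real.sqrt ((∑ i, x i) ^ 2) := Real.sqrt_le_sqrt h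
    _ = ∑ i, x i := Real.sqrt_sq hx

namespace SSC1

variable {H : Matrix n r ℝ}

lemma mem_coneRows (hH : SSC1 H) {x : r → ℝ} (hx : ∀ i, 0 ≤ x i)
    (h : ((Fintype.card r : ℝ) - 1) * ∑ i, x i ^ 2 ≤ (∑ i, x i) ^ 2) : x ∈ coneRows H :=
  hH ⟨hx, sqrt_mul_l2_le_sum (Finset.sum_nonneg fun i _ => hx i) h⟩

lemma one_mem_coneRows (hH : SSC1 H) : (1 : r → ℝ) ∈ coneRows H := by
  refine hH.mem_coneRows (fun _ => zero_le_one) ?_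
  simp only [Pi.one_apply, one_pow, Finset.sum_const, Finset.card_univ, nsmul_eq_mul, mul_one]
  nlinarith

lemma one_add_single_mem_coneRows [DecidableEq r] (hH : SSC1 H) (j : r) :
    (1 + Pi.single j 1 : r → ℝ) ∈ coneRows H := by
  refine hH.mem_coneRows (fun i => by rcases eq_or_ne i j with rfl | hij <;> norm_num [*]) ?_
  have hsum : ∑ i, (1 + Pi.single j 1 : r → ℝ) i = Fintype.card r + 1 := by
    simp [Finset.sum_add_distrib]
  have hsq : ∑ i, (1 + Pi.single j 1 : r → ℝ) i ^ 2 = Fintype.card r + 3 := by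
    have (i : r) : (1 + Pi.single j 1 : r → ℝ) i ^ 2 = 1 + 3 * (Pi.single j 1 : r → ℝ) i := by
      rcases eq_or_ne i j with rfl | hij <;> norm_num [*]
    rw [Finset.sum_congr rfl fun i _ => this i]
    simp [Finset.sum_add_distrib, ← Finset.mul_sum]
  rw [hsum, hsq]
  nlinarith

lemma range_mulVecLin_transpose_eq_top (hH : SSC1 H) : LinearMap.range Hᵀ.mulVecLin = ⊤ := by
  classical
  set R := LinearMap.range Hᵀ.mulVecLin
  have hone : (1 : r → ℝ) ∈ R := coneRows_subset_range H hH.one_mem_coneRows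
  have hsingle (j : r) : Pi.single j 1 ∈ R := by
    simpa using R.sub_mem (coneRows_subset_range H (hH.one_add_single_mem_coneRows j)) hone
  rw [eq_top_iff, ← (Pi.basisFun ℝ r).span_eq, Submodule.span_le, Set.range_subset_iff]
  simpa using hsingle

lemma rank_eq_card (hH : SSC1 H) : H.rank = Fintype.card r := by
  rw [← rank_transpose, rank, hH.range_mulVecLin_transpose_eq_top, finrank_top,
    Module.finrank_fintype_fun_eq_card]

end SSC1

theorem SSC1_full_column_rank_general {n r : ℕ} (H : Matrix (Fin n) (Fin r) ℝ)
    (hssc1 : SSC1 H) :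
    H.rank = r := by
  simpa using hssc1.rank_eq_card

/-- A nonnegative matrix `H ∈ ℝ₊^{n×r}` with `r ≥ 2` satisfying SSC1 has full
column rank `r`. -/
theorem SSC1_full_column_rank {n r : ℕ} (H : Matrix (Fin n) (Fin r) ℝ)
    (hr : 2 ≤ r) (hH : ∀ i j, 0 ≤ H i j) (hssc1 : SSC1 H) :
    H.rank = r :=
  SSC1_full_column_rank_general H hssc1
end

section
/- Let A ∈ ℝ^{r×r} satisfy A^T e = e and suppose every column of A lies in the cone C* = {x ∈ ℝ^r : e^T x ≥ ‖x‖₂}. Then |det(A)| ≤ 1. -/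
/-!
Hadamard's inequality bounds `|det A|` by the product of the Euclidean lengths of the columns, and
a column `x ∈ C*` with `eᵀx = 1` has `‖x‖₂ ≤ 1`. For Hadamard's inequality, scale the columns of `A`
to unit length to get `B`: then `BᵀB` is positive semidefinite with trace `r`, so AM-GM on its
eigenvalues gives `det (BᵀB) ≤ 1`.
-/

open Matrix

open Finset

theorem Real.prod_le_arith_mean_pow {ι : Type*} (s : Finset ι) (z : ι → ℝ) (hz : ∀ i ∈ s, 0 ≤ z i) :
    ∏ i ∈ s, z i ≤ ((∑ i ∈ s, z i) / #s) ^ #s := by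
  rcases s.eq_empty_or_nonempty with rfl | hs
  · simp
  have hcard : (0 : ℝ) < #s := by exact_mod_cast hs.card_pos
  have hgm : ∏ i ∈ s, z i ^ (#s : ℝ)⁻¹ ≤ (∑ i ∈ s, z i) / #s := by
    simpa [← mul_sum, div_eq_inv_mul] using
      Real.geom_mean_le_arith_mean_weighted s (fun _ => (#s : ℝ)⁻¹) z
        (fun _ _ => by positivity) (by simp [hcard.ne']) hz
  calc ∏ i ∈ s, z i = (∏ i ∈ s, z i ^ (#s : ℝ)⁻¹) ^ #s := by
        rw [← prod_pow]
        exact prod_congr rfl fun i hi =>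
          (Real.rpow_inv_natCast_pow (hz i hi) hs.card_pos.ne').symm
    _ ≤ ((∑ i ∈ s, z i) / #s) ^ #s :=
        pow_le_pow_left₀ (prod_nonneg fun i hi => Real.rpow_nonneg (hz i hi) _) hgm _

theorem Matrix.PosSemidef.det_le_trace_div_card_pow {n : Type*} [Fintype n] [DecidableEq n]
    {M : Matrix n n ℝ} (hM : M.PosSemidef) :
    M.det ≤ (M.trace / Fintype.card n) ^ Fintype.card n := by
  rw [hM.isHermitian.det_eq_prod_eigenvalues, hM.isHermitian.trace_eq_sum_eigenvalues]
  simpa using Real.prod_le_arith_mean_pow univ _ fun i _ => hM.eigenvalues_nonneg i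

theorem Matrix.trace_transpose_mul_self {m n R : Type*} [Fintype m] [Fintype n] [CommSemiring R]
    (A : Matrix m n R) : (Aᵀ * A).trace = ∑ j, ∑ i, A i j ^ 2 := by
  simp [trace, mul_apply, sq]

theorem Matrix.det_sq_le_one_of_sum_sq_le_one {n : Type*} [Fintype n] [DecidableEq n]
    {B : Matrix n n ℝ} (hB : ∀ j, ∑ i, B i j ^ 2 ≤ 1) : B.det ^ 2 ≤ 1 := by
  have htrace : (Bᵀ * B).trace ≤ Fintype.card n := by
    simpa [trace_transpose_mul_self] using sum_le_sum fun j (_ : j ∈ univ) => hB j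
  have hPSD : (Bᵀ * B).PosSemidef := by
    simpa using posSemidef_conjTranspose_mul_self B
  calc B.det ^ 2 = (Bᵀ * B).det := by rw [det_mul, det_transpose, sq]
    _ ≤ ((Bᵀ * B).trace / Fintype.card n) ^ Fintype.card n := hPSD.det_le_trace_div_card_pow
    _ ≤ 1 := pow_le_one₀ (div_nonneg hPSD.trace_nonneg (by positivity))
        (div_le_one_of_le₀ htrace (by positivity))

theorem Matrix.det_sq_le_prod_sum_sq {n : Type*} [Fintype n] [DecidableEq n]
    (A : Matrix n n ℝ) : A.det ^ 2 ≤ ∏ j, ∑ i, A i j ^ 2 := by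
  by_cases hzero : ∃ j, ∑ i, A i j ^ 2 = 0
  · obtain ⟨j, hj⟩ := hzero
    have hcol : ∀ i, A i j = 0 := fun i => pow_eq_zero_iff two_ne_zero |>.mp <|
      (sum_eq_zero_iff_of_nonneg fun i _ => sq_nonneg (A i j)).mp hj i (mem_univ i)
    rw [det_eq_zero_of_column_eq_zero j hcol, zero_pow two_ne_zero]
    exact prod_nonneg fun j _ => sum_nonneg fun i _ => sq_nonneg _
  push Not at hzero
  have hpos : ∀ j, 0 < ∑ i, A i j ^ 2 := fun j =>
    (sum_nonneg fun i _ => sq_nonneg (A i j)).lt_of_ne' (hzero j)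
  set c : n → ℝ := fun j => √(∑ i, A i j ^ 2)
  have hc : ∀ j, c j ^ 2 = ∑ i, A i j ^ 2 := fun j => Real.sq_sqrt (hpos j).le
  have hc0 : ∀ j, c j ≠ 0 := fun j => (Real.sqrt_pos.mpr (hpos j)).ne'
  set B := A * diagonal fun j => (c j)⁻¹
  have hB : ∀ j, ∑ i, B i j ^ 2 ≤ 1 := fun j => by
    simp only [B, mul_diagonal, mul_pow, ← sum_mul, ← hc, inv_pow]
    exact (mul_inv_cancel₀ (pow_ne_zero 2 (hc0 j))).le
  have hdet : B.det ^ 2 = A.det ^ 2 / ∏ j, ∑ i, A i j ^ 2 := by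
    simp only [B, det_mul, det_diagonal, ← hc, prod_pow, prod_inv_distrib]
    field_simp
  rw [← div_le_one (prod_pos fun j _ => hpos j), ← hdet]
  exact det_sq_le_one_of_sum_sq_le_one hB

theorem Matrix.abs_det_le_prod_l2_col {n : Type*} [Fintype n] [DecidableEq n]
    (A : Matrix n n ℝ) : |A.det| ≤ ∏ j, l2 fun i => A i j := by
  simp only [l2]
  rw [← Real.sqrt_sq_eq_abs, ← Real.sqrt_prod _ fun j _ => sum_nonneg fun i _ => sq_nonneg _]
  exact Real.sqrt_le_sqrt A.det_sq_le_prod_sum_sq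

/-- If `Aᵀ e = e` (columns of `A` sum to one) and every column of `A` lies in
`C* = {x : eᵀx ≥ ‖x‖₂}`, then `|det A| ≤ 1`. -/
theorem abs_det_le_one_of_columns_in_dual_cone {r : ℕ}
    (A : Matrix (Fin r) (Fin r) ℝ)
    (hAe : ∀ j, ∑ i, A i j = 1)
    (hcol : ∀ j, l2 (fun i => A i j) ≤ ∑ i, A i j) :
    |A.det| ≤ 1 :=
  A.abs_det_le_prod_l2_col.trans <|
    prod_le_one (fun _ _ => Real.sqrt_nonneg _) fun j _ => hAe j ▸ hcol j
end

section
/- Let X = W H^T be a separable NMF of size r = rank(X): W ∈ ℝ^{m×r}, H ∈ ℝ_+^{n×r} separable. Then for any other factorization X = W* (H*)^T with H* ∈ ℝ_+^{n×r} separable, there exist a permutation matrix Π and an invertible diagonal matrix D such that W* = W D Π and H* = H D^{-1} Π. -/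
/-!
Reading `X = W Hᵀ = W* H*ᵀ` at the rows of `H*` that are positive multiples of unit vectors
writes every column of `W*` as a nonnegative combination of the columns of `W`, i.e.
`W* = W M` with `M ≥ 0`; symmetrically `W = W* N` with `N ≥ 0`. Since `rank X = r`, `W` has
full column rank and can be cancelled, so `M N = 1`. A nonnegative matrix with a nonnegative
inverse is a positive diagonal matrix times a permutation matrix, and cancelling `W` once more
in `W Hᵀ = W M H*ᵀ` gives the relation between `H` and `H*`.
-/

open Matrix

/-- `H` is separable: some `r × r` row-submatrix of `H` is a diagonal matrix
with positive diagonal entries. -/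
def Separable {n r : Type*} [Fintype n] [Fintype r]
    (H : Matrix n r ℝ) : Prop :=
  ∃ K : r → n, Function.Injective K ∧
    (∀ i j : r, i ≠ j → H (K i) j = 0) ∧ (∀ i : r, 0 < H (K i) i)

namespace Matrix

section FullColumnRank

variable {l m n : Type*} [Fintype l] [Fintype n] {K : Type*} [Field K]

theorem rank_eq_card_width_of_mul_eq {X : Matrix m l K} {W : Matrix m n K} {B : Matrix n l K}
    (hX : X = W * B) (hrank : X.rank = Fintype.card n) : W.rank = Fintype.card n :=
  le_antisymm (rank_le_card_width W) (hrank ▸ hX ▸ rank_mul_le_left W B)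

theorem linearIndependent_col_of_rank_eq_card {W : Matrix m n K}
    (hW : W.rank = Fintype.card n) : LinearIndependent K W.col := by
  rw [linearIndependent_iff_card_eq_finrank_span, ← hW, rank_eq_finrank_span_cols]
  rfl

theorem mul_left_cancel_of_rank_eq_card {W : Matrix m n K} (hW : W.rank = Fintype.card n)
    {A B : Matrix n l K} (h : W * A = W * B) : A = B :=
  ext_iff_mulVec.2 fun v => mulVec_injective_iff.2 (linearIndependent_col_of_rank_eq_card hW) <| by
    rw [mulVec_mulVec, h, ← mulVec_mulVec]

end FullColumnRank

theorem exists_apply_ne_zero_of_mul_eq_one {n R : Type*} [Fintype n] [DecidableEq n]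
    [NonAssocSemiring R] [Nontrivial R] {M N : Matrix n n R} (hMN : M * N = 1) (i : n) :
    ∃ k, M i k ≠ 0 := by
  by_contra! hrow
  simpa [mul_apply, hrow] using congr_fun (congr_fun hMN i) i

section NonnegInverse

variable {n R : Type*} [Fintype n] [DecidableEq n] [Field R] [LinearOrder R]
  [IsStrictOrderedRing R] {M N : Matrix n n R}

theorem eq_of_apply_ne_zero_of_mul_eq_one (hM : ∀ i j, 0 ≤ M i j) (hN : ∀ i j, 0 ≤ N i j)
    (hMN : M * N = 1) {i j k : n} (hik : M i k ≠ 0) (hkj : N k j ≠ 0) : i = j := by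
  by_contra hij
  have hsum : ∑ l, M i l * N l j = 0 := by rw [← mul_apply, hMN, one_apply_ne hij]
  have hterm := (Finset.sum_eq_zero_iff_of_nonneg fun l _ => mul_nonneg (hM i l) (hN l j)).1
    hsum k (Finset.mem_univ k)
  exact mul_ne_zero hik hkj hterm

theorem exists_diagonal_mul_permMatrix_of_mul_eq_one (hM : ∀ i j, 0 ≤ M i j)
    (hN : ∀ i j, 0 ≤ N i j) (hMN : M * N = 1) :
    ∃ (σ : Equiv.Perm n) (d : n → R), (∀ i, 0 < d i) ∧ M = diagonal d * σ.permMatrix R := by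
  have hNM : N * M = 1 := mul_eq_one_comm.1 hMN
  have hsupp : ∀ {i k}, M i k ≠ 0 → N k i ≠ 0 := fun {i k} hik => by
    obtain ⟨j, hkj⟩ := exists_apply_ne_zero_of_mul_eq_one hNM k
    rwa [eq_of_apply_ne_zero_of_mul_eq_one hM hN hMN hik hkj]
  have hrow : ∀ {i k l}, M i k ≠ 0 → M i l ≠ 0 → k = l := fun hik hil =>
    eq_of_apply_ne_zero_of_mul_eq_one hN hM hNM (hsupp hik) hil
  have hcol : ∀ {i j k}, M i k ≠ 0 → M j k ≠ 0 → i = j := fun hik hjk =>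
    eq_of_apply_ne_zero_of_mul_eq_one hM hN hMN hik (hsupp hjk)
  choose τ hτ using exists_apply_ne_zero_of_mul_eq_one hMN
  have hτinj : Function.Injective τ := fun i j hij => hcol (hτ i) (hij ▸ hτ j)
  let σ := Equiv.ofBijective τ (Finite.injective_iff_bijective.1 hτinj)
  refine ⟨σ, fun i => M i (τ i), fun i => (hM _ _).lt_of_ne' (hτ i), ?_⟩
  ext i j
  by_cases hj : τ i = j
  · simp [σ, hj]
  · have : M i j = 0 := by_contra fun hij => hj (hrow (hτ i) hij)
    simp [σ, hj, this]

end NonnegInverse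

end Matrix

theorem Separable.exists_nonneg_mul_eq {m n r : Type*} [Fintype n] [Fintype r] [DecidableEq r]
    {W W' : Matrix m r ℝ} {H H' : Matrix n r ℝ} (hH : ∀ i j, 0 ≤ H i j) (hH' : Separable H')
    (hX : W * Hᵀ = W' * H'ᵀ) : ∃ M : Matrix r r ℝ, (∀ i j, 0 ≤ M i j) ∧ W' = W * M := by
  obtain ⟨L, -, hoff, hpos⟩ := hH'
  have hdiag : H'.submatrix L id = diagonal fun i => H' (L i) i := by
    ext i j
    by_cases hij : i = j
    · simp [hij]
    · simp [hij, hoff i j hij]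
  have hcols : W * (H.submatrix L id)ᵀ = W' * diagonal fun i => H' (L i) i :=
    calc W * (H.submatrix L id)ᵀ = (W * Hᵀ).submatrix id L := rfl
      _ = W' * (H'.submatrix L id)ᵀ := by rw [hX]; rfl
      _ = W' * diagonal fun i => H' (L i) i := by rw [hdiag, diagonal_transpose]
  refine ⟨(H.submatrix L id)ᵀ * diagonal fun j => (H' (L j) j)⁻¹,
    fun i j => by
      rw [mul_diagonal]; exact mul_nonneg (hH (L j) i) (inv_nonneg.2 (hpos j).le), ?_⟩
  rw [← Matrix.mul_assoc, hcols, Matrix.mul_assoc, diagonal_mul_diagonal]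
  simp [fun i => mul_inv_cancel₀ (hpos i).ne']

/-- Identifiability of separable NMF: if `X = W Hᵀ` with `H` nonnegative
separable and `r = rank X`, then any other separable NMF `X = W* H*ᵀ` of size
`r` coincides with it up to a permutation and an invertible diagonal scaling:
`W* = W D Π` and `H* = H D⁻¹ Π`. -/
theorem separable_NMF_identifiable {m n r : ℕ}
    (X : Matrix (Fin m) (Fin n) ℝ)
    (W Wstar : Matrix (Fin m) (Fin r) ℝ)
    (H Hstar : Matrix (Fin n) (Fin r) ℝ)
    (hrank : X.rank = r)
    (hH : ∀ i j, 0 ≤ H i j) (hHsep : Separable H)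
    (hX : X = W * Hᵀ)
    (hHstar : ∀ i j, 0 ≤ Hstar i j) (hHstarSep : Separable Hstar)
    (hXstar : X = Wstar * Hstarᵀ) :
    ∃ (σ : Equiv.Perm (Fin r)) (d : Fin r → ℝ), (∀ i, d i ≠ 0) ∧
      Wstar = W * Matrix.diagonal d * σ.permMatrix ℝ ∧
      Hstar = H * Matrix.diagonal (fun i => (d i)⁻¹) * σ.permMatrix ℝ := by
  obtain ⟨M, hM, hWM⟩ := hHstarSep.exists_nonneg_mul_eq hH (hX.symm.trans hXstar)
  obtain ⟨N, hN, hWN⟩ := hHsep.exists_nonneg_mul_eq hHstar (hXstar.symm.trans hX)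
  have hW : W.rank = Fintype.card (Fin r) :=
    rank_eq_card_width_of_mul_eq hX (by rw [hrank, Fintype.card_fin])
  have hMN : M * N = 1 :=
    mul_left_cancel_of_rank_eq_card hW (by rw [← Matrix.mul_assoc, ← hWM, ← hWN, Matrix.mul_one])
  obtain ⟨σ, d, hd, rfl⟩ := exists_diagonal_mul_permMatrix_of_mul_eq_one hM hN hMN
  have hHt : Hᵀ = diagonal d * σ.permMatrix ℝ * Hstarᵀ :=
    mul_left_cancel_of_rank_eq_card hW (by rw [← Matrix.mul_assoc, ← hWM, ← hX, hXstar])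
  have hdd : diagonal d * diagonal (fun i => (d i)⁻¹) = 1 := by
    simp [diagonal_mul_diagonal, fun i => mul_inv_cancel₀ (hd i).ne']
  have hPP : (σ.permMatrix ℝ)ᵀ * σ.permMatrix ℝ = 1 := by
    rw [transpose_permMatrix, ← permMatrix_mul, mul_inv_cancel, permMatrix_one]
  have hH' : H = Hstar * ((σ.permMatrix ℝ)ᵀ * diagonal d) := by
    rw [← transpose_transpose H, hHt, transpose_mul, transpose_mul, diagonal_transpose,
      transpose_transpose]
  refine ⟨σ, d, fun i => (hd i).ne', by rw [hWM, Matrix.mul_assoc], ?_⟩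
  rw [hH', Matrix.mul_assoc, Matrix.mul_assoc, Matrix.mul_assoc, ← Matrix.mul_assoc (diagonal d),
    hdd, Matrix.one_mul, hPP, Matrix.mul_one]
end

section
/- Let X = U₁ G U₂^T where U₁ ∈ ℝ_+^{n₁×r} and U₂ ∈ ℝ_+^{n₂×r} are separable and r = rank(X). Then for any other factorization X = U₁* G* (U₂*)^T of size r with U₁*, U₂* separable, there exist permutation matrices Π₁, Π₂ and invertible diagonal matrices D₁, D₂ with U₁* = U₁ D₁ Π₁, U₂* = U₂ D₂ Π₂, and G* = Π₁^T D₁^{-1} G D₂^{-1} Π₂. -/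
open Matrix

/-! Since `rank X = r`, every factor of `X = U₁ (G U₂ᵀ) = U₁* (G* U₂*ᵀ)` has full rank `r`, so
`U₁` and `U₁*` have the column space of `X`: `U₁* = U₁ A` and `U₁ = U₁* B` with `A B = 1`.
Reading these identities on the rows where `U₁`, resp. `U₁*`, is positive diagonal shows that
`A` and `B` are nonnegative, and a nonnegative matrix with nonnegative inverse is a positive
diagonal matrix times a permutation matrix. The same holds for `U₂`, and cancelling the full-rank
outer factors of `U₁* G* U₂*ᵀ = U₁* (B₁ G B₂ᵀ) U₂*ᵀ` gives `G* = B₁ G B₂ᵀ`. -/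

namespace Matrix

section Rank

variable {K : Type*} [Field K] {l m n : Type*} [Fintype l] [Fintype n]

theorem rank_eq_card_of_rank_mul_eq_left {A : Matrix m n K} {B : Matrix n l K}
    (h : (A * B).rank = Fintype.card n) : A.rank = Fintype.card n :=
  le_antisymm A.rank_le_card_width (h ▸ rank_mul_le_left A B)

theorem rank_eq_card_of_rank_mul_eq_right {A : Matrix m n K} {B : Matrix n l K}
    (h : (A * B).rank = Fintype.card n) : B.rank = Fintype.card n :=
  le_antisymm B.rank_le_card_height (h ▸ rank_mul_le_right A B)

variable [Fintype m] [DecidableEq n]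

theorem exists_mul_eq_one_of_rank_eq_card_width {A : Matrix m n K}
    (h : A.rank = Fintype.card n) : ∃ L : Matrix n m K, L * A = 1 := by
  classical
  have hker : LinearMap.ker A.mulVecLin = ⊥ := by
    rw [← Submodule.finrank_eq_zero]
    have := LinearMap.finrank_range_add_finrank_ker A.mulVecLin
    rw [Module.finrank_fintype_fun_eq_card] at this
    rw [rank] at h
    omega
  obtain ⟨g, hg⟩ := A.mulVecLin.exists_leftInverse_of_injective hker
  refine ⟨LinearMap.toMatrix' g, ?_⟩
  rw [← LinearMap.toMatrix'_toLin' A, ← LinearMap.toMatrix'_comp, toLin'_apply', hg,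
    LinearMap.toMatrix'_id]

theorem exists_mul_eq_one_of_rank_eq_card_height {A : Matrix n m K}
    (h : A.rank = Fintype.card n) : ∃ S : Matrix m n K, A * S = 1 := by
  obtain ⟨L, hL⟩ := exists_mul_eq_one_of_rank_eq_card_width (A := Aᵀ) (by rwa [rank_transpose])
  refine ⟨Lᵀ, ?_⟩
  rw [← transpose_transpose (A * Lᵀ), transpose_mul, transpose_transpose, hL, transpose_one]

theorem eq_of_mul_mul_eq_of_rank_eq_card {U : Matrix m n K} {V : Matrix n l K}
    {M N : Matrix n n K} (hrank : (U * M * V).rank = Fintype.card n)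
    (h : U * M * V = U * N * V) : M = N := by
  obtain ⟨L, hL⟩ := exists_mul_eq_one_of_rank_eq_card_width
    (rank_eq_card_of_rank_mul_eq_left (rank_eq_card_of_rank_mul_eq_left hrank))
  obtain ⟨S, hS⟩ := exists_mul_eq_one_of_rank_eq_card_height
    (rank_eq_card_of_rank_mul_eq_right hrank)
  have cancel : ∀ P : Matrix n n K, L * (U * P * V) * S = P := fun P => by
    simp only [Matrix.mul_assoc, hS, Matrix.mul_one, ← Matrix.mul_assoc L, hL, Matrix.one_mul]
  rw [← cancel M, h, cancel]

theorem exists_eq_mul_and_eq_mul_of_rank_eq_card {X : Matrix m l K} {U U' : Matrix m n K}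
    {R R' : Matrix n l K} (hrank : X.rank = Fintype.card n) (hX : X = U * R)
    (hX' : X = U' * R') : ∃ A B : Matrix n n K, U' = U * A ∧ U = U' * B ∧ A * B = 1 := by
  subst hX
  obtain ⟨L, hL⟩ := exists_mul_eq_one_of_rank_eq_card_width
    (rank_eq_card_of_rank_mul_eq_left hrank)
  obtain ⟨S, hS⟩ := exists_mul_eq_one_of_rank_eq_card_height
    (rank_eq_card_of_rank_mul_eq_right hrank)
  obtain ⟨S', hS'⟩ := exists_mul_eq_one_of_rank_eq_card_height
    (rank_eq_card_of_rank_mul_eq_right (hX' ▸ hrank))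
  have hUA : U' = U * (R * S') := by
    rw [← Matrix.mul_assoc, hX', Matrix.mul_assoc, hS', Matrix.mul_one]
  have hUB : U = U' * (R' * S) := by
    rw [← Matrix.mul_assoc, ← hX', Matrix.mul_assoc, hS, Matrix.mul_one]
  refine ⟨R * S', R' * S, hUA, hUB, ?_⟩
  calc R * S' * (R' * S) = L * (U * (R * S') * (R' * S)) := by
        rw [← Matrix.mul_assoc L, ← Matrix.mul_assoc L, hL, Matrix.one_mul]
    _ = 1 := by rw [← hUA, ← hUB, hL]

end Rank

section Monomial

variable {R n : Type*} [Fintype n] [DecidableEq n]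

theorem permMatrix_transpose_mul_self [NonAssocSemiring R] (σ : Equiv.Perm n) :
    (σ.permMatrix R)ᵀ * σ.permMatrix R = 1 := by
  rw [transpose_permMatrix, ← permMatrix_mul, mul_inv_cancel, permMatrix_one]

/- Row `i` of `A` and column `i` of `B` overlap in a positive position `f i`; as all terms of
`(A * B) i k` and `(B * A) (f i) j` are nonnegative, the off-diagonal zeros of `A * B` and
`B * A` make `f` injective and `A` vanish off `f`. -/
theorem eq_diagonal_mul_permMatrix_of_nonneg_of_mul_eq_one
    [Semiring R] [LinearOrder R] [IsStrictOrderedRing R] {A B : Matrix n n R}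
    (hA : ∀ i j, 0 ≤ A i j) (hB : ∀ i j, 0 ≤ B i j) (hAB : A * B = 1) (hBA : B * A = 1) :
    ∃ (σ : Equiv.Perm n) (d : n → R), (∀ i, 0 < d i) ∧ A = diagonal d * σ.permMatrix R := by
  have term_eq_zero : ∀ {P Q : Matrix n n R}, (∀ i j, 0 ≤ P i j) → (∀ i j, 0 ≤ Q i j) →
      ∀ {i k}, (P * Q) i k = 0 → ∀ j, P i j * Q j k = 0 := fun hP hQ _ _ h j =>
    (Finset.sum_eq_zero_iff_of_nonneg fun j _ => mul_nonneg (hP _ j) (hQ j _)).1 h j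
      (Finset.mem_univ j)
  have hpos : ∀ i, ∃ j, 0 < A i j ∧ 0 < B j i := fun i => by
    have : (A * B) i i ≠ 0 := by simp [hAB]
    obtain ⟨j, -, hj⟩ := Finset.exists_ne_zero_of_sum_ne_zero this
    exact ⟨j, (hA i j).lt_of_ne (left_ne_zero_of_mul hj).symm,
      (hB j i).lt_of_ne (right_ne_zero_of_mul hj).symm⟩
  choose f hfA hfB using hpos
  have hoff : ∀ i j, j ≠ f i → A i j = 0 := fun i j hj => by
    have := term_eq_zero hB hA (by rw [hBA, one_apply_ne hj.symm]) i
    by_contra hne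
    exact (mul_pos (hfB i) ((hA i j).lt_of_ne' hne)).ne' this
  have hinj : Function.Injective f := fun i₁ i₂ he => by
    by_contra hne
    have := term_eq_zero hA hB (by rw [hAB, one_apply_ne hne]) (f i₁)
    exact (mul_pos (hfA i₁) (he ▸ hfB i₂)).ne' this
  refine ⟨Equiv.ofBijective f hinj.bijective_of_finite, fun i => A i (f i), hfA, ?_⟩
  ext i j
  by_cases hj : f i = j
  · subst hj
    simp
  · simp [hj, hoff i j (Ne.symm hj)]

theorem eq_transpose_permMatrix_mul_diagonal_inv_of_mul_eq_one [DivisionRing R]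
    {σ : Equiv.Perm n} {d : n → R} (hd : ∀ i, d i ≠ 0) {B : Matrix n n R}
    (hB : diagonal d * σ.permMatrix R * B = 1) :
    B = (σ.permMatrix R)ᵀ * diagonal (fun i => (d i)⁻¹) := by
  refine (left_inv_eq_right_inv ?_ hB).symm
  rw [Matrix.mul_assoc, ← Matrix.mul_assoc (diagonal _), diagonal_mul_diagonal]
  simp only [inv_mul_cancel₀ (hd _), diagonal_one, Matrix.one_mul, permMatrix_transpose_mul_self]

end Monomial

end Matrix

theorem Separable.nonneg_of_nonneg_mul {n r s : Type*} [Fintype n] [Fintype r]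
    {U : Matrix n r ℝ} (hU : Separable U) {A : Matrix r s ℝ}
    (hUA : ∀ i j, 0 ≤ (U * A) i j) (i : r) (j : s) : 0 ≤ A i j := by
  obtain ⟨K, -, hoff, hdiag⟩ := hU
  have hrow : (U * A) (K i) j = U (K i) i * A i j := by
    simp only [mul_apply]
    exact Fintype.sum_eq_single i fun k hk => by rw [hoff i k hk.symm, zero_mul]
  exact nonneg_of_mul_nonneg_right (hrow ▸ hUA (K i) j) (hdiag i)

/-- Identifiability of separable order-2 nTD (nonnegative matrix
tri-factorization): if `X = U₁ G U₂ᵀ` with `U₁, U₂` nonnegative separable and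
`r = rank X`, then any other such tri-factorization of size `r` with separable
nonnegative factors coincides up to permutations and invertible diagonal
scalings: `U₁* = U₁ D₁ Π₁`, `U₂* = U₂ D₂ Π₂`, `G* = Π₁ᵀ D₁⁻¹ G D₂⁻¹ Π₂`. -/
theorem separable_tri_factorization_identifiable {n₁ n₂ r : ℕ}
    (X : Matrix (Fin n₁) (Fin n₂) ℝ)
    (U₁ U₁star : Matrix (Fin n₁) (Fin r) ℝ)
    (U₂ U₂star : Matrix (Fin n₂) (Fin r) ℝ)
    (G Gstar : Matrix (Fin r) (Fin r) ℝ)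
    (hrank : X.rank = r)
    (hU₁ : ∀ i j, 0 ≤ U₁ i j) (hU₁sep : Separable U₁)
    (hU₂ : ∀ i j, 0 ≤ U₂ i j) (hU₂sep : Separable U₂)
    (hX : X = U₁ * G * U₂ᵀ)
    (hU₁star : ∀ i j, 0 ≤ U₁star i j) (hU₁starSep : Separable U₁star)
    (hU₂star : ∀ i j, 0 ≤ U₂star i j) (hU₂starSep : Separable U₂star)
    (hXstar : X = U₁star * Gstar * U₂starᵀ) :
    ∃ (σ₁ σ₂ : Equiv.Perm (Fin r)) (d₁ d₂ : Fin r → ℝ),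
      (∀ i, d₁ i ≠ 0) ∧ (∀ i, d₂ i ≠ 0) ∧
      U₁star = U₁ * Matrix.diagonal d₁ * σ₁.permMatrix ℝ ∧
      U₂star = U₂ * Matrix.diagonal d₂ * σ₂.permMatrix ℝ ∧
      Gstar = (σ₁.permMatrix ℝ)ᵀ * Matrix.diagonal (fun i => (d₁ i)⁻¹) * G *
        Matrix.diagonal (fun i => (d₂ i)⁻¹) * σ₂.permMatrix ℝ := by
  have hrankX : X.rank = Fintype.card (Fin r) := by rw [hrank, Fintype.card_fin]
  obtain ⟨A₁, B₁, hA₁, hB₁, hAB₁⟩ := exists_eq_mul_and_eq_mul_of_rank_eq_card hrankX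
    (hX.trans (Matrix.mul_assoc _ _ _)) (hXstar.trans (Matrix.mul_assoc _ _ _))
  obtain ⟨A₂, B₂, hA₂, hB₂, hAB₂⟩ := exists_eq_mul_and_eq_mul_of_rank_eq_card
    (X := Xᵀ) (U := U₂) (U' := U₂star) (by rwa [rank_transpose])
    (by rw [hX, transpose_mul, transpose_transpose])
    (by rw [hXstar, transpose_mul, transpose_transpose])
  obtain ⟨σ₁, d₁, hd₁, hA₁d⟩ := eq_diagonal_mul_permMatrix_of_nonneg_of_mul_eq_one
    (hU₁sep.nonneg_of_nonneg_mul (hA₁ ▸ hU₁star)) (hU₁starSep.nonneg_of_nonneg_mul (hB₁ ▸ hU₁))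
    hAB₁ (mul_eq_one_comm.1 hAB₁)
  obtain ⟨σ₂, d₂, hd₂, hA₂d⟩ := eq_diagonal_mul_permMatrix_of_nonneg_of_mul_eq_one
    (hU₂sep.nonneg_of_nonneg_mul (hA₂ ▸ hU₂star)) (hU₂starSep.nonneg_of_nonneg_mul (hB₂ ▸ hU₂))
    hAB₂ (mul_eq_one_comm.1 hAB₂)
  have hGstar : Gstar = B₁ * G * B₂ᵀ := eq_of_mul_mul_eq_of_rank_eq_card (hXstar ▸ hrankX) <| by
    rw [← hXstar, hX, hB₁, hB₂, transpose_mul]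
    simp only [Matrix.mul_assoc]
  have hB₁d := eq_transpose_permMatrix_mul_diagonal_inv_of_mul_eq_one (fun i => (hd₁ i).ne')
    (hA₁d ▸ hAB₁)
  have hB₂d := eq_transpose_permMatrix_mul_diagonal_inv_of_mul_eq_one (fun i => (hd₂ i).ne')
    (hA₂d ▸ hAB₂)
  refine ⟨σ₁, σ₂, d₁, d₂, fun i => (hd₁ i).ne', fun i => (hd₂ i).ne',
    by rw [hA₁, hA₁d, Matrix.mul_assoc], by rw [hA₂, hA₂d, Matrix.mul_assoc], ?_⟩
  rw [hGstar, hB₁d, hB₂d, transpose_mul, transpose_transpose, diagonal_transpose]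
  simp only [Matrix.mul_assoc]
end

section
/- Let U₁ ∈ ℝ^{n₁×r₁} satisfy the SSC and U₂ ∈ ℝ^{n₂×r₂} be separable. Then the Kronecker product U₁ ⊗ U₂ ∈ ℝ^{n₁n₂ × r₁r₂} satisfies the SSC. -/
/-!
Separability puts the rows of `U₁ ⊗ diag d`, with `d > 0`, among the rows of `U₁ ⊗ U₂`, and
adding nonnegative rows to a matrix satisfying the SSC preserves it; so it suffices to treat
`U₁ ⊗ diag d`, whose rows act separately on the slices `v(·, j)` of a vector `v`.

SSC1: restricting a vector of `C` to a set of coordinates gives a vector of the smaller `C`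
(Cauchy–Schwarz on the complementary coordinates), so every slice of `x ∈ C` lies in the cone
generated by the rows of `U₁`.

SSC2: if `(U₁ ⊗ diag d) v ≥ 0`, every slice `w_j` has `U₁ w_j ≥ 0`, hence lies in `C*`, by SSC1
for `U₁` and the duality between `C` and `C*`. Then `‖v‖ ≤ ‖(eᵀ w_j)_j‖ ≤ Σ eᵀ w_j = eᵀ v`, so
`‖v‖ = eᵀ v` forces all slices but one to vanish and the remaining one onto the boundary of `C*`,
where SSC2 for `U₁` applies.
-/

open Matrix Kronecker

/-- The sufficiently scattered condition (SSC1 and SSC2) for a nonnegative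
matrix `H ∈ ℝ₊^{n×r}`. -/
def SSC {n r : Type*} [Fintype n] [Fintype r] [DecidableEq r]
    (H : Matrix n r ℝ) : Prop :=
  (∀ i j, 0 ≤ H i j) ∧
  ({x : r → ℝ | (∀ i, 0 ≤ x i) ∧
      Real.sqrt ((Fintype.card r : ℝ) - 1) * l2 x ≤ ∑ i, x i} ⊆ coneRows H) ∧
  ({y : r → ℝ | ∀ i, 0 ≤ (H *ᵥ y) i} ∩
      frontier {x : r → ℝ | l2 x ≤ ∑ i, x i} =
    {v : r → ℝ | ∃ lam : ℝ, 0 ≤ lam ∧ ∃ k : r, v = lam • (Pi.single k 1 : r → ℝ)})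

open Finset Filter Topology

-- The cone `C` of SSC1 and its dual `C*`, whose boundary enters SSC2.
def sscCone (ι : Type*) [Fintype ι] : Set (ι → ℝ) :=
  {x | (∀ i, 0 ≤ x i) ∧ √((Fintype.card ι : ℝ) - 1) * l2 x ≤ ∑ i, x i}

def sscDualCone (ι : Type*) [Fintype ι] : Set (ι → ℝ) :=
  {x | l2 x ≤ ∑ i, x i}

section L2

variable {ι : Type*} [Fintype ι]

lemma l2_eq_norm (x : ι → ℝ) : l2 x = ‖(WithLp.toLp 2 x : EuclideanSpace ℝ ι)‖ := by
  simp [l2, EuclideanSpace.norm_eq]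

lemma l2_nonneg (x : ι → ℝ) : 0 ≤ l2 x := Real.sqrt_nonneg _

lemma sq_l2 (x : ι → ℝ) : l2 x ^ 2 = ∑ i, x i ^ 2 :=
  Real.sq_sqrt (sum_nonneg fun _ _ => sq_nonneg _)

lemma l2_eq_zero_iff {x : ι → ℝ} : l2 x = 0 ↔ x = 0 := by
  simp [l2_eq_norm]

lemma continuous_l2 : Continuous (l2 : (ι → ℝ) → ℝ) := by
  unfold l2; fun_prop

lemma l2_add_le (x y : ι → ℝ) : l2 (x + y) ≤ l2 x + l2 y := by
  simpa only [l2_eq_norm, WithLp.toLp_add] using norm_add_le _ _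

lemma l2_const (c : ℝ) : l2 (fun _ : ι => c) = √(Fintype.card ι) * |c| := by
  simp [l2, Real.sqrt_mul, Real.sqrt_sq_eq_abs]

lemma l2_smul_single [DecidableEq ι] (c : ℝ) (k : ι) : l2 (c • Pi.single k 1) = |c| := by
  simp [l2_eq_norm, norm_smul]

lemma l2_le_sum_of_nonneg {x : ι → ℝ} (hx : ∀ i, 0 ≤ x i) : l2 x ≤ ∑ i, x i :=
  (Real.sqrt_le_left (sum_nonneg fun i _ => hx i)).mpr
    (sum_sq_le_sq_sum_of_nonneg fun i _ => hx i)

lemma l2_le_l2_of_le {x y : ι → ℝ} (hx : ∀ i, 0 ≤ x i) (hxy : ∀ i, x i ≤ y i) : l2 x ≤ l2 y :=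
  Real.sqrt_le_sqrt (sum_le_sum fun i _ => pow_le_pow_left₀ (hx i) (hxy i) 2)

lemma eq_of_l2_eq_of_le {x y : ι → ℝ} (hx : ∀ i, 0 ≤ x i) (hxy : ∀ i, x i ≤ y i)
    (h : l2 x = l2 y) : x = y := by
  have hsq : ∑ i, x i ^ 2 = ∑ i, y i ^ 2 := by rw [← sq_l2, ← sq_l2, h]
  have hle : ∀ i ∈ univ, x i ^ 2 ≤ y i ^ 2 := fun i _ => pow_le_pow_left₀ (hx i) (hxy i) 2
  funext i
  exact (sq_eq_sq₀ (hx i) ((hx i).trans (hxy i))).1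
    ((sum_eq_sum_iff_of_le hle).1 hsq i (mem_univ i))

lemma l2_prod {α β : Type*} [Fintype α] [Fintype β] (v : α × β → ℝ) :
    l2 v = l2 fun j => l2 fun k => v (k, j) := by
  simp only [l2, Real.sq_sqrt (sum_nonneg fun _ _ => sq_nonneg _), Fintype.sum_prod_type_right]

lemma exists_forall_ne_eq_zero_of_l2_eq_sum [Nonempty ι] {x : ι → ℝ} (hx : ∀ i, 0 ≤ x i)
    (h : l2 x = ∑ i, x i) : ∃ i₀, ∀ i ≠ i₀, x i = 0 := by
  classical
  set S := ∑ i, x i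
  have hle : ∀ i, x i ≤ S := fun i => single_le_sum (fun j _ => hx j) (mem_univ i)
  -- `(∑ x)² = ∑ x²` makes every cross term `x i * (S - x i)` vanish
  have hterm : ∀ i, x i = 0 ∨ x i = S := by
    have hsum : ∑ i, x i * (S - x i) = 0 := by
      have := sq_l2 x
      rw [h] at this
      simp only [mul_sub, sum_sub_distrib, ← sum_mul, ← sq]
      linarith
    intro i
    have hi := (sum_eq_zero_iff_of_nonneg fun j _ => mul_nonneg (hx j) (sub_nonneg.2 (hle j))).1
      hsum i (mem_univ i)
    rcases mul_eq_zero.1 hi with h0 | h0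
    · exact .inl h0
    · exact .inr (by linarith)
  by_cases hx0 : ∀ i, x i = 0
  · exact ⟨Classical.arbitrary ι, fun i _ => hx0 i⟩
  obtain ⟨i₀, hi₀⟩ := not_forall.1 hx0
  refine ⟨i₀, fun i hi => (hterm i).resolve_right fun hxi => ?_⟩
  have hpair : x i + x i₀ ≤ S := by
    rw [← sum_pair hi]
    exact sum_le_sum_of_subset_of_nonneg (subset_univ _) fun j _ _ => hx j
  have hxi₀ : x i₀ = S := (hterm i₀).resolve_left hi₀
  have hpos : 0 < x i₀ := lt_of_le_of_ne (hx i₀) (Ne.symm hi₀)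
  linarith

lemma exists_slices_eq_zero_of_l2_eq_sum {α β : Type*} [Fintype α] [Fintype β] [Nonempty β]
    {v : α × β → ℝ} (hv : l2 v = ∑ p, v p)
    (hslice : ∀ j, l2 (fun k => v (k, j)) ≤ ∑ k, v (k, j)) :
    ∃ j₀, (∀ j ≠ j₀, ∀ k, v (k, j) = 0) ∧ l2 (fun k => v (k, j₀)) = ∑ k, v (k, j₀) := by
  set t : β → ℝ := fun j => l2 fun k => v (k, j)
  set σ : β → ℝ := fun j => ∑ k, v (k, j)
  have ht : ∀ j, 0 ≤ t j := fun j => l2_nonneg _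
  have hσ : ∀ j, 0 ≤ σ j := fun j => (ht j).trans (hslice j)
  -- `l2 v = l2 t ≤ l2 σ ≤ ∑ σ = ∑ v = l2 v`, so both inequalities are equalities
  have htσ : l2 t ≤ l2 σ := l2_le_l2_of_le ht hslice
  have hσsum : l2 σ ≤ ∑ j, σ j := l2_le_sum_of_nonneg hσ
  have hvt : l2 v = l2 t := l2_prod v
  have hvσ : ∑ p, v p = ∑ j, σ j := Fintype.sum_prod_type_right v
  obtain ⟨j₀, hj₀⟩ := exists_forall_ne_eq_zero_of_l2_eq_sum hσ (by linarith)
  have heq : t = σ := eq_of_l2_eq_of_le ht hslice (by linarith)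
  refine ⟨j₀, fun j hj k => ?_, congrFun heq j₀⟩
  have h0 : t j = 0 := (congrFun heq j).trans (hj₀ j hj)
  exact congrFun (l2_eq_zero_iff.1 h0) k

end L2

lemma sum_le_sqrt_card_mul_sqrt_sum_sq {ι : Type*} (s : Finset ι) (x : ι → ℝ) :
    ∑ i ∈ s, x i ≤ √(#s : ℝ) * √(∑ i ∈ s, x i ^ 2) := by
  simpa using Real.sum_mul_le_sqrt_mul_sqrt s (fun _ => 1) x

lemma add_mul_le_sqrt_mul_sqrt (a b A B : ℝ) :
    a * A + b * B ≤ √(a ^ 2 + b ^ 2) * √(A ^ 2 + B ^ 2) := by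
  rw [← Real.sqrt_mul (by positivity)]
  exact (le_abs_self _).trans (Real.abs_le_sqrt (by nlinarith [sq_nonneg (a * B - b * A)]))

section Cone

variable {ι : Type*} [Fintype ι]

lemma sqrt_card_sub_one_mul_le_sum_restrict {x : ι → ℝ}
    (hx : √((Fintype.card ι : ℝ) - 1) * l2 x ≤ ∑ i, x i) {s : Finset ι} (hs : s.Nonempty) :
    √((#s : ℝ) - 1) * √(∑ i ∈ s, x i ^ 2) ≤ ∑ i ∈ s, x i := by
  classical
  set A := √(∑ i ∈ s, x i ^ 2)
  set B := √(∑ i ∈ sᶜ, x i ^ 2)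
  have hcompl : ∑ i ∈ sᶜ, x i ≤ √((Fintype.card ι : ℝ) - #s) * B := by
    simpa [card_compl, Nat.cast_sub (card_le_univ s)] using
      sum_le_sqrt_card_mul_sqrt_sum_sq sᶜ x
  have hl2 : l2 x = √(A ^ 2 + B ^ 2) := by
    rw [Real.sq_sqrt (sum_nonneg fun _ _ => sq_nonneg _),
      Real.sq_sqrt (sum_nonneg fun _ _ => sq_nonneg _), sum_add_sum_compl]
    rfl
  have hcs := add_mul_le_sqrt_mul_sqrt √((#s : ℝ) - 1) √((Fintype.card ι : ℝ) - #s) A B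
  have hs1 : (1 : ℝ) ≤ #s := by exact_mod_cast hs.card_pos
  have hsι : (#s : ℝ) ≤ Fintype.card ι := by exact_mod_cast card_le_univ s
  rw [Real.sq_sqrt (by linarith), Real.sq_sqrt (by linarith),
    show (#s : ℝ) - 1 + (Fintype.card ι - #s) = Fintype.card ι - 1 by ring, ← hl2] at hcs
  linarith [sum_add_sum_compl s x]

lemma nonneg_of_sqrt_card_sub_one_mul_le_sum {x : ι → ℝ}
    (hx : √((Fintype.card ι : ℝ) - 1) * l2 x ≤ ∑ i, x i) (i : ι) : 0 ≤ x i := by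
  simpa using sqrt_card_sub_one_mul_le_sum_restrict hx (singleton_nonempty i)

lemma comp_mem_sscCone {α : Type*} [Fintype α] [Nonempty α] (f : α ↪ ι) {x : ι → ℝ}
    (hx : x ∈ sscCone ι) : x ∘ f ∈ sscCone α := by
  refine ⟨fun a => hx.1 (f a), ?_⟩
  simpa [l2, sum_map] using
    sqrt_card_sub_one_mul_le_sum_restrict hx.2 (univ_nonempty.map (f := f))

lemma mem_sscDualCone_of_forall_dotProduct_nonneg {w : ι → ℝ}
    (hw : ∀ x ∈ sscCone ι, 0 ≤ x ⬝ᵥ w) : w ∈ sscDualCone ι := by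
  rcases isEmpty_or_nonempty ι with _ | _
  · simp [sscDualCone, l2]
  set r : ℝ := (Fintype.card ι : ℝ)
  have hr : 1 ≤ r := Nat.one_le_cast.2 Fintype.card_pos
  set S := ∑ i, w i
  set Q := ∑ i, w i ^ 2
  set P := r * Q - S ^ 2
  have hP : 0 ≤ P := by
    have := sq_sum_le_card_mul_sum_sq (s := univ) (f := w)
    simp only [card_univ] at this
    linarith
  -- `x = c • 1 - w` with `eᵀx = u` lies in `C` exactly when `(r - 1) P ≤ u²`
  have htest : ∀ u, 0 ≤ u → (r - 1) * P ≤ u ^ 2 → P ≤ u * S := by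
    intro u hu huP
    set c := (u + S) / r
    have hc : r * c = u + S := mul_div_cancel₀ _ (by linarith)
    set x : ι → ℝ := fun i => c - w i
    have hsum : ∑ i, x i = u := by
      simp only [x, sum_sub_distrib, sum_const, card_univ, nsmul_eq_mul]
      linarith
    have hsq : r * ∑ i, x i ^ 2 = u ^ 2 + P := by
      simp only [x, sub_sq, sum_add_distrib, sum_sub_distrib, sum_const, card_univ,
        nsmul_eq_mul, ← mul_sum]
      linear_combination (r * c - S + u) * hc
    have hdot : r * (x ⬝ᵥ w) = u * S - P := by
      simp only [x, dotProduct, sub_mul, sum_sub_distrib, ← mul_sum, ← sq]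
      linear_combination S * hc
    have hx : √(r - 1) * l2 x ≤ ∑ i, x i := by
      rw [hsum, l2, ← Real.sqrt_mul (by linarith), Real.sqrt_le_left hu]
      nlinarith
    have hxw := hw x ⟨nonneg_of_sqrt_card_sub_one_mul_le_sum hx, hx⟩
    nlinarith
  set u₀ := √((r - 1) * P)
  have hu₀ : u₀ ^ 2 = (r - 1) * P := Real.sq_sqrt (by nlinarith)
  have h₀ := htest u₀ (Real.sqrt_nonneg _) hu₀.ge
  have hS : 0 ≤ S := by
    have h₁ := htest (u₀ + 1) (by positivity) (by nlinarith [Real.sqrt_nonneg ((r - 1) * P)])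
    exact (mul_nonneg_iff_of_pos_left (by positivity)).1 (hP.trans h₁)
  have hPS : P ≤ (r - 1) * S ^ 2 := by
    rcases hP.eq_or_lt with h | h
    · rw [← h]; nlinarith
    · nlinarith [pow_le_pow_left₀ hP h₀ 2]
  show l2 w ≤ S
  rw [l2, Real.sqrt_le_left hS]
  nlinarith

lemma mem_frontier_sscDualCone_iff (hcard : 2 ≤ Fintype.card ι) {x : ι → ℝ} :
    x ∈ frontier (sscDualCone ι) ↔ l2 x = ∑ i, x i := by
  have hsum : Continuous fun x : ι → ℝ => ∑ i, x i := by fun_prop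
  refine ⟨fun hx => frontier_le_subset_eq continuous_l2 hsum hx, fun hx => ?_⟩
  have hclosed : IsClosed (sscDualCone ι) := isClosed_le continuous_l2 hsum
  rw [frontier_eq_closure_inter_closure, hclosed.closure_eq]
  refine ⟨hx.le, ?_⟩
  have hlim : Tendsto (fun t : ℝ => x - fun _ => t) (𝓝[>] 0) (𝓝 x) := by
    have : Continuous fun t : ℝ => x - fun _ => t := by fun_prop
    simpa [← Pi.zero_def] using (this.tendsto 0).mono_left nhdsWithin_le_nhds
  -- moving by `-t • 1` lowers `l2` by at most `t √r` but the coordinate sum by `t r`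
  refine mem_closure_of_tendsto hlim (eventually_nhdsWithin_of_forall fun t (ht : 0 < t) => ?_)
  have hr : (2 : ℝ) ≤ Fintype.card ι := by exact_mod_cast hcard
  have hsqrt : √(Fintype.card ι : ℝ) < Fintype.card ι :=
    Real.sqrt_lt_self_iff.2 (by linarith)
  have htri := l2_add_le (x - fun _ => t) (fun _ => t)
  rw [sub_add_cancel, l2_const, abs_of_pos ht] at htri
  show ¬ l2 (x - fun _ => t) ≤ ∑ i, (x - fun _ => t : ι → ℝ) i
  simp only [Pi.sub_apply, sum_sub_distrib, sum_const, card_univ, nsmul_eq_mul]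
  nlinarith

lemma smul_single_mem_frontier_sscDualCone [DecidableEq ι] (hcard : 2 ≤ Fintype.card ι)
    {c : ℝ} (hc : 0 ≤ c) (k : ι) : c • Pi.single k 1 ∈ frontier (sscDualCone ι) := by
  rw [mem_frontier_sscDualCone_iff hcard, l2_smul_single, abs_of_nonneg hc]
  simp [Pi.single_apply]

end Cone

lemma mulVec_smul_single_nonneg {n r : Type*} [Fintype r] [DecidableEq r] {H : Matrix n r ℝ}
    (hH : ∀ i j, 0 ≤ H i j) {c : ℝ} (hc : 0 ≤ c) (k : r) (i : n) :
    0 ≤ (H *ᵥ c • Pi.single k 1) i := by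
  simpa [mulVec_smul] using mul_nonneg hc (hH i k)

section Matrix

variable {m n r s : Type*} [Fintype n] [Fintype r] [Fintype s]

lemma SSC_iff [DecidableEq r] (H : Matrix n r ℝ) :
    SSC H ↔ (∀ i j, 0 ≤ H i j) ∧ sscCone r ⊆ coneRows H ∧
      {y | ∀ i, 0 ≤ (H *ᵥ y) i} ∩ frontier (sscDualCone r) =
        {v | ∃ lam : ℝ, 0 ≤ lam ∧ ∃ k : r, v = lam • Pi.single k 1} :=
  Iff.rfl

lemma mem_sscDualCone_of_mulVec_nonneg {H : Matrix n r ℝ} (hH : sscCone r ⊆ coneRows H)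
    {w : r → ℝ} (hw : ∀ i, 0 ≤ (H *ᵥ w) i) : w ∈ sscDualCone r :=
  mem_sscDualCone_of_forall_dotProduct_nonneg fun x hx => by
    obtain ⟨y, hy, rfl⟩ := hH hx
    rw [mulVec_transpose, ← dotProduct_mulVec]
    exact dotProduct_nonneg_of_nonneg hy hw

lemma SSC.of_isEmpty [DecidableEq r] [IsEmpty r] {H : Matrix n r ℝ} (hH : ∀ i j, 0 ≤ H i j) :
    SSC H := by
  have huniv : sscDualCone r = Set.univ :=
    Set.eq_univ_of_forall fun x => by simp [sscDualCone, l2]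
  refine (SSC_iff H).2 ⟨hH, fun x _ => ⟨0, fun _ => le_rfl, Subsingleton.elim _ _⟩, ?_⟩
  simp [huniv]

lemma SSC.two_le_card [DecidableEq r] [Nonempty r] {H : Matrix n r ℝ} (hH : SSC H) :
    2 ≤ Fintype.card r := by
  -- with a single column `C*` is the half-line `x ≥ 0`, which has `e_k` in its interior
  obtain ⟨k⟩ := ‹Nonempty r›
  by_contra! hcard
  have : Subsingleton r := Fintype.card_le_one_iff_subsingleton.mp (by omega)
  have hk : Pi.single k 1 ∈ frontier (sscDualCone r) :=
    ((Set.ext_iff.1 hH.2.2 _).2 ⟨1, zero_le_one, k, (one_smul _ _).symm⟩).2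
  have hint : {x : r → ℝ | 0 < x k} ⊆ interior (sscDualCone r) :=
    interior_maximal (fun x (hx : 0 < x k) => by
      simp [sscDualCone, l2, Fintype.sum_subsingleton _ k, Real.sqrt_sq hx.le])
      (isOpen_lt continuous_const (continuous_apply k))
  exact hk.2 (hint (by simp))

lemma coneRows_submatrix_subset (H : Matrix n r ℝ) [Fintype m] (f : m → n) :
    coneRows (H.submatrix f id) ⊆ coneRows H := by
  classical
  rintro _ ⟨y, hy, rfl⟩
  refine ⟨fun i => ∑ a with f a = i, y a, fun i => sum_nonneg fun a _ => hy a, ?_⟩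
  ext k
  simp only [mulVec, dotProduct, transpose_apply, submatrix_apply, id, mul_sum]
  rw [← sum_fiberwise univ f]
  exact sum_congr rfl fun i _ => sum_congr rfl fun a ha => by rw [(mem_filter.1 ha).2]

lemma SSC.of_submatrix [DecidableEq r] [Fintype m] {H : Matrix n r ℝ} (hH : ∀ i j, 0 ≤ H i j)
    (f : m → n) (h : SSC (H.submatrix f id)) : SSC H := by
  obtain ⟨-, h₁, h₂⟩ := (SSC_iff _).1 h
  refine (SSC_iff H).2 ⟨hH, h₁.trans (coneRows_submatrix_subset H f), ?_⟩
  rw [← h₂]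
  ext y
  refine ⟨fun hy => ⟨fun i => hy.1 (f i), hy.2⟩, fun hy => ⟨?_, hy.2⟩⟩
  obtain ⟨c, hc, k, rfl⟩ := h₂ ▸ hy
  exact mulVec_smul_single_nonneg hH hc k

lemma kronecker_diagonal_mulVec_apply {R : Type*} [CommSemiring R] [DecidableEq s]
    (A : Matrix m n R) (d : s → R) (v : n × s → R) (i : m) (j : s) :
    (A ⊗ₖ diagonal d *ᵥ v) (i, j) = d j * (A *ᵥ fun k => v (k, j)) i := by
  simp [mulVec, dotProduct, diagonal_apply, Fintype.sum_prod_type, mul_sum, mul_left_comm,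
    mul_assoc]

lemma mem_coneRows_kronecker_diagonal [DecidableEq s] [Fintype m] (A : Matrix m n ℝ)
    {d : s → ℝ} (hd : ∀ j, 0 < d j) {x : n × s → ℝ}
    (hx : ∀ j, (fun k => x (k, j)) ∈ coneRows A) : x ∈ coneRows (A ⊗ₖ diagonal d) := by
  choose z hz hzx using hx
  refine ⟨fun p => (d p.2)⁻¹ * z p.2 p.1,
    fun p => mul_nonneg (inv_nonneg.2 (hd _).le) (hz _ _), ?_⟩
  ext ⟨k, j⟩
  rw [← kroneckerMap_transpose, diagonal_transpose, kronecker_diagonal_mulVec_apply,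
    congrFun (hzx j) k, show (fun i => (d j)⁻¹ * z j i) = (d j)⁻¹ • z j from rfl, mulVec_smul,
    Pi.smul_apply, smul_eq_mul, mul_inv_cancel_left₀ (hd j).ne']

end Matrix

section Kronecker

variable {m n r s : Type*} [Fintype m] [Fintype n] [Fintype r] [Fintype s]
  [DecidableEq r] [DecidableEq s]

lemma SSC.exists_eq_smul_single_of_kronecker_diagonal [Nonempty r] [Nonempty s]
    {U : Matrix n r ℝ} (hU : SSC U) {d : s → ℝ} (hd : ∀ j, 0 < d j) {v : r × s → ℝ}
    (hv : ∀ p, 0 ≤ (U ⊗ₖ diagonal d *ᵥ v) p) (hvF : l2 v = ∑ p, v p) :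
    ∃ c : ℝ, 0 ≤ c ∧ ∃ p : r × s, v = c • Pi.single p 1 := by
  obtain ⟨-, hU₁, hU₂⟩ := (SSC_iff U).1 hU
  have hslice : ∀ j i, 0 ≤ (U *ᵥ fun k => v (k, j)) i := fun j i =>
    (mul_nonneg_iff_of_pos_left (hd j)).1 (kronecker_diagonal_mulVec_apply U d v i j ▸ hv (i, j))
  obtain ⟨j₀, hzero, hj₀⟩ := exists_slices_eq_zero_of_l2_eq_sum hvF fun j =>
    mem_sscDualCone_of_mulVec_nonneg hU₁ (hslice j)
  obtain ⟨c, hc, k, hk⟩ := (Set.ext_iff.1 hU₂ _).1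
    ⟨hslice j₀, (mem_frontier_sscDualCone_iff hU.two_le_card).2 hj₀⟩
  refine ⟨c, hc, (k, j₀), funext fun ⟨k', j⟩ => ?_⟩
  by_cases hj : j = j₀
  · subst hj
    simpa [Pi.single_apply] using congrFun hk k'
  · simp [hzero j hj, hj]

theorem SSC.kronecker_diagonal {U : Matrix n r ℝ} (hU : SSC U) {d : s → ℝ}
    (hd : ∀ j, 0 < d j) : SSC (U ⊗ₖ diagonal d) := by
  have hnn : ∀ i j, 0 ≤ (U ⊗ₖ diagonal d) i j := fun i j =>
    mul_nonneg (hU.1 _ _) (by by_cases h : i.2 = j.2 <;> simp [h, (hd _).le])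
  rcases isEmpty_or_nonempty (r × s) with _ | hne
  · exact SSC.of_isEmpty hnn
  have : Nonempty r := ⟨hne.some.1⟩
  have : Nonempty s := ⟨hne.some.2⟩
  have hcard : 2 ≤ Fintype.card (r × s) := by
    rw [Fintype.card_prod]
    nlinarith [hU.two_le_card, Fintype.card_pos (α := s)]
  refine (SSC_iff _).2 ⟨hnn, fun x hx => mem_coneRows_kronecker_diagonal U hd fun j =>
    hU.2.1 (comp_mem_sscCone (Function.Embedding.sectL r j) hx), Set.ext fun v => ⟨?_, ?_⟩⟩
  · rintro ⟨hv, hvF⟩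
    exact hU.exists_eq_smul_single_of_kronecker_diagonal hd hv
      ((mem_frontier_sscDualCone_iff hcard).1 hvF)
  · rintro ⟨c, hc, p, rfl⟩
    exact ⟨mulVec_smul_single_nonneg hnn hc p, smul_single_mem_frontier_sscDualCone hcard hc p⟩

end Kronecker

/-- If `U₁` satisfies the SSC and `U₂` is (nonnegative) separable, then their
Kronecker product `U₁ ⊗ U₂` satisfies the SSC. -/
theorem SSC_kronecker_separable {n₁ n₂ r₁ r₂ : ℕ}
    (U₁ : Matrix (Fin n₁) (Fin r₁) ℝ)
    (U₂ : Matrix (Fin n₂) (Fin r₂) ℝ)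
    (hU₁ : SSC U₁)
    (hU₂nn : ∀ i j, 0 ≤ U₂ i j) (hU₂sep : Separable U₂) :
    SSC (U₁ ⊗ₖ U₂) := by
  obtain ⟨K, -, hK0, hKpos⟩ := hU₂sep
  have hdiag : U₂.submatrix K id = diagonal fun j => U₂ (K j) j := by
    ext i j
    by_cases h : i = j
    · simp [h]
    · simp [h, hK0 i j h]
  refine SSC.of_submatrix (fun i j => mul_nonneg (hU₁.1 _ _) (hU₂nn _ _)) (Prod.map id K) ?_
  change SSC (U₁ ⊗ₖ U₂.submatrix K id)
  rw [hdiag]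
  exact hU₁.kronecker_diagonal hKpos
end
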